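/- Let D be an n×n circular Robinson dissimilarity matrix. Let I be a nonempty proper arc of [n] with borders a, b, let a′ = (a−1) mod n and b′ = (b+1) mod n be the borders of Iᶜ, and let 𝒜, ℬ ⊆ I and 𝒜′, ℬ′ ⊆ Iᶜ be pairwise disjoint sets with a ∈ 𝒜, b ∈ ℬ, a′ ∈ 𝒜′, b′ ∈ ℬ′, such that either for all (x′, x, y, y′) ∈ 𝒜′×𝒜×ℬ×ℬ′ the quadruple (x′, x, y, y′) is cyclically ordered, or for all (x′, x, y, y′) ∈ 𝒜′×𝒜×ℬ×ℬ′ the quadruple (x′, y, x, y′) is cyclically ordered. Then for every z ∈ [n], writing f_z(x) = D(z,x), the following are equivalent: (1) there exists r > 0 such that {a, a′} ⊆ B_r(z) and {b, b′} ∩ B_r(z) = ∅; (2) there exist (x′, x, y, y′) ∈ 𝒜′×𝒜×ℬ×ℬ′ with max{f_z(x), f_z(x′)} < min{f_z(y), f_z(y′)}; (3) max{min_{x∈𝒜} f_z(x), min_{x′∈𝒜′} f_z(x′)} < min{max_{y∈ℬ} f_z(y), max_{y′∈ℬ′} f_z(y′)}. -/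

import Mathlib

/-!
Fix the centre `z` and write `f = D z`. Seen from `z`, Robinson's condition says that a point
outside an open arc from `j` to `l` through `z` is at least as far from `z` as `j` or `l`.
If `x' x y y'` are cyclically ordered with `max (f x) (f x') < min (f y) (f y')`, this forces `z`
strictly between `y'` and `y` on the side of `x'` and `x`; using `y` or `y'` as far witnesses,
every point of the closed arc from `x'` to `x` then lies within `max (f x) (f x')` of `z`, and
every point of the closed arc from `y` to `y'` at least `min (f y) (f y')` away. The borders
`a - 1`, `a` lie on the first arc and `a + k`, `a + k + 1` on the second, so separating candidates
yield separating borders, which is the ball condition. The second orientation cannot hold for the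
borders themselves, and the inf/sup test is a reformulation by choosing extremal candidates.
-/

open Fin.NatCast

/-- The standard cyclic order on `Fin n`. -/
def CycOrd {n : ℕ} (i j k : Fin n) : Prop :=
  (i < j ∧ j < k) ∨ (j < k ∧ k < i) ∨ (k < i ∧ i < j)

/-- `i,j,k,l` are pairwise distinct and cyclically ordered. -/
def CycOrd4 {n : ℕ} (i j k l : Fin n) : Prop :=
  i ≠ j ∧ i ≠ k ∧ i ≠ l ∧ j ≠ k ∧ j ≠ l ∧ k ≠ l ∧ CycOrd i j k ∧ CycOrd i k l

/-- `D` is a dissimilarity matrix. -/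
def IsDissim {n : ℕ} (D : Fin n → Fin n → ℝ) : Prop :=
  (∀ i j, D i j = D j i) ∧ (∀ i j, 0 ≤ D i j) ∧ (∀ i, D i i = 0)

/-- `D` is a circular Robinson matrix. -/
def CircRobinson {n : ℕ} (D : Fin n → Fin n → ℝ) : Prop :=
  ∀ i j k l : Fin n, CycOrd4 i j k l → min (D j k) (D k l) ≤ D i k

/-- The arc `{a, a+1, …, a+k}` (mod `n`) of `Fin n`. -/
def arcSet (n : ℕ) [NeZero n] (a : Fin n) (k : ℕ) : Set (Fin n) :=
  {x | ∃ t : ℕ, t ≤ k ∧ x = a + (t : Fin n)}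

theorem cycOrd_sub_iff {n : ℕ} (r u v w : Fin n) :
    CycOrd (u - r) (v - r) (w - r) ↔ CycOrd u v w := by
  have hval : ∀ x : Fin n, r ≤ x ∧ (x - r).val = x.val - r.val ∨
      x < r ∧ (x - r).val = n + x.val - r.val := fun x =>
    (le_or_gt r x).imp (fun h => ⟨h, Fin.sub_val_of_le h⟩) (fun h => ⟨h, Fin.coe_sub_iff_lt.2 h⟩)
  unfold CycOrd
  rcases hval u with ⟨hu, eu⟩ | ⟨hu, eu⟩ <;> rcases hval v with ⟨hv, ev⟩ | ⟨hv, ev⟩ <;>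
    rcases hval w with ⟨hw, ew⟩ | ⟨hw, ew⟩ <;> simp only [Fin.lt_def, eu, ev, ew] <;> omega

theorem mem_arcSet_iff {n : ℕ} [NeZero n] {a u : Fin n} {k : ℕ} :
    u ∈ arcSet n a k ↔ (u - a).val ≤ k := by
  constructor
  · rintro ⟨t, ht, rfl⟩
    rw [add_sub_cancel_left, Fin.val_natCast]
    exact (Nat.mod_le t n).trans ht
  · intro h
    exact ⟨(u - a).val, h, by rw [Fin.cast_val_eq_self, add_sub_cancel]⟩

theorem val_add_natCast_sub_self {n : ℕ} [NeZero n] (a : Fin n) {t : ℕ} (ht : t < n) :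
    ((a + (t : Fin n)) - a).val = t := by
  rw [add_sub_cancel_left, Fin.val_cast_of_lt ht]

theorem val_sub_one_sub_self {n : ℕ} [NeZero n] (a : Fin n) (hn : 1 < n) :
    ((a - 1) - a).val = n - 1 := by
  rw [sub_sub_cancel_left, Fin.val_neg', Fin.val_one', Nat.mod_eq_of_lt hn,
    Nat.mod_eq_of_lt (Nat.sub_lt (by omega) one_pos)]

theorem add_one_lt_of_sub_one_notMem_arcSet {n : ℕ} [NeZero n] {a : Fin n} {k : ℕ}
    (h : a - 1 ∉ arcSet n a k) : k + 1 < n := by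
  rw [mem_arcSet_iff] at h
  have := ((a - 1) - a).isLt
  omega

namespace CircRobinson

variable {n : ℕ} {D : Fin n → Fin n → ℝ}

theorem min_le_of_cycOrd_of_not_cycOrd (hsym : ∀ i j, D i j = D j i) (hR : CircRobinson D)
    {i j k l : Fin n}
    (hjkl : CycOrd j k l) (hi : ¬ CycOrd j i l) : min (D k j) (D k l) ≤ D k i := by
  by_cases hij : i = j
  · exact hij ▸ min_le_left _ _
  by_cases hil : i = l
  · exact hil ▸ min_le_right _ _
  have h4 : CycOrd4 i j k l := by unfold CycOrd4 CycOrd at *; omega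
  simpa only [hsym k] using hR i j k l h4

variable {x' x y y' z : Fin n}

theorem cycOrd_of_max_lt_min (hD : IsDissim D) (hR : CircRobinson D) (hq : CycOrd4 x' x y y')
    (hlt : max (D z x) (D z x') < min (D z y) (D z y')) : CycOrd y' z y := by
  obtain ⟨hsym, hnn, hdiag⟩ := hD
  have hzy : z ≠ y := by
    rintro rfl
    linarith [min_le_left (D z z) (D z y'), le_max_left (D z x) (D z x'), hnn z x, hdiag z]
  have hzy' : z ≠ y' := by
    rintro rfl
    linarith [min_le_right (D z y) (D z z), le_max_left (D z x) (D z x'), hnn z x, hdiag z]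
  by_contra h
  have hfar := min_le_of_cycOrd_of_not_cycOrd hsym hR (i := x) (j := y) (k := z) (l := y')
    (by unfold CycOrd4 CycOrd at *; omega) (by unfold CycOrd4 CycOrd at *; omega)
  linarith [le_max_left (D z x) (D z x')]

theorem le_max_of_not_cycOrd (hD : IsDissim D) (hR : CircRobinson D) (hq : CycOrd4 x' x y y')
    (hlt : max (D z x) (D z x') < min (D z y) (D z y')) {p : Fin n} (hp : ¬ CycOrd x p x') :
    D z p ≤ max (D z x) (D z x') := by
  have hz := cycOrd_of_max_lt_min hD hR hq hlt
  obtain ⟨hsym, hnn, hdiag⟩ := hD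
  by_cases hpz : p = z
  · subst hpz
    exact hdiag p ▸ (hnn p x).trans (le_max_left _ _)
  by_cases hpx : p = x
  · exact hpx ▸ le_max_left _ _
  by_cases hpx' : p = x'
  · exact hpx' ▸ le_max_right _ _
  -- the far witness is whichever of `y`, `y'` lies beyond `z` as seen from `p`
  by_cases hside : CycOrd p z y
  · have hfar := min_le_of_cycOrd_of_not_cycOrd hsym hR (i := x') hside
      (by unfold CycOrd4 CycOrd at *; omega)
    have := min_le_left (D z y) (D z y')
    rcases min_le_iff.1 hfar with h | h <;> linarith [le_max_right (D z x) (D z x')]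
  · have hfar := min_le_of_cycOrd_of_not_cycOrd hsym hR (i := x) (j := y') (k := z) (l := p)
      (by unfold CycOrd4 CycOrd at *; omega) (by unfold CycOrd4 CycOrd at *; omega)
    have := min_le_right (D z y) (D z y')
    rcases min_le_iff.1 hfar with h | h <;> linarith [le_max_left (D z x) (D z x')]

theorem min_le_of_not_cycOrd (hD : IsDissim D) (hR : CircRobinson D) (hq : CycOrd4 x' x y y')
    (hlt : max (D z x) (D z x') < min (D z y) (D z y')) {q : Fin n} (hq' : ¬ CycOrd y' q y) :
    min (D z y) (D z y') ≤ D z q :=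
  min_comm (D z y) _ ▸
    min_le_of_cycOrd_of_not_cycOrd hD.1 hR (cycOrd_of_max_lt_min hD hR hq hlt) hq'

theorem max_border_lt_min_border [NeZero n] (hD : IsDissim D) (hR : CircRobinson D) {a : Fin n}
    {k : ℕ} (hk : k + 1 < n) (hx : x ∈ arcSet n a k) (hy : y ∈ arcSet n a k)
    (hx' : x' ∉ arcSet n a k) (hy' : y' ∉ arcSet n a k) (hq : CycOrd4 x' x y y')
    (hlt : max (D z x) (D z x') < min (D z y) (D z y')) :
    max (D z a) (D z (a - 1)) < min (D z (a + (k : Fin n))) (D z (a + (k : Fin n) + 1)) := by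
  -- rotated by `a`, the arc becomes `0, …, k` and `a - 1` its last point `n - 1`
  rw [mem_arcSet_iff] at hx hy hx' hy'
  have ha : (a - a).val = 0 := by rw [sub_self, Fin.val_zero]
  have ha' := val_sub_one_sub_self a (by omega)
  have hb := val_add_natCast_sub_self a (t := k) (by omega)
  have hb' : ((a + (k : Fin n) + 1) - a).val = k + 1 := by
    rw [add_assoc, ← Nat.cast_add_one, val_add_natCast_sub_self a hk]
  have hfa := le_max_of_not_cycOrd hD hR hq hlt (p := a)
    (by rw [← cycOrd_sub_iff a]; unfold CycOrd; simp only [Fin.lt_def, ha]; omega)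
  have hfa' := le_max_of_not_cycOrd hD hR hq hlt (p := a - 1)
    (by rw [← cycOrd_sub_iff a]; unfold CycOrd; simp only [Fin.lt_def, ha']; omega)
  have hfb := min_le_of_not_cycOrd hD hR hq hlt (q := a + (k : Fin n))
    (by rw [← cycOrd_sub_iff a]; unfold CycOrd; simp only [Fin.lt_def, hb]; omega)
  have hfb' := min_le_of_not_cycOrd hD hR hq hlt (q := a + (k : Fin n) + 1)
    (by rw [← cycOrd_sub_iff a]; unfold CycOrd; simp only [Fin.lt_def, hb']; omega)
  exact (max_le hfa hfa').trans_lt (hlt.trans_le (le_min hfb hfb'))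

end CircRobinson

theorem not_cycOrd_sub_one_add_self {n : ℕ} [NeZero n] {a : Fin n} {k : ℕ} (hk : k + 1 < n) :
    ¬ CycOrd (a - 1) (a + (k : Fin n)) a := by
  rw [← cycOrd_sub_iff a]
  unfold CycOrd
  simp only [Fin.lt_def, sub_self, Fin.val_zero, val_sub_one_sub_self a (by omega),
    val_add_natCast_sub_self a (by omega : k < n)]
  omega

theorem exists_pos_sublevel_separating_iff {α : Type*} (f : α → ℝ) (hf : ∀ j, 0 ≤ f j)
    (a a' b b' : α) :
    (∃ r : ℝ, 0 < r ∧ ({a, a'} : Set α) ⊆ {j | f j ≤ r} ∧ ({b, b'} : Set α) ∩ {j | f j ≤ r} = ∅) ↔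
      max (f a) (f a') < min (f b) (f b') := by
  simp only [Set.insert_subset_iff, Set.singleton_subset_iff, Set.mem_ofPred_eq,
    Set.eq_empty_iff_forall_notMem, Set.mem_inter_iff, Set.mem_insert_iff,
    Set.mem_singleton_iff, not_and, not_le, forall_eq_or_imp, forall_eq]
  constructor
  · rintro ⟨r, -, ⟨ha, ha'⟩, hb, hb'⟩
    exact (max_le ha ha').trans_lt (lt_min hb hb')
  · intro h
    have := (hf a).trans (le_max_left (f a) (f a'))
    have := min_le_left (f b) (f b')
    have := min_le_right (f b) (f b')
    refine ⟨(max (f a) (f a') + min (f b) (f b')) / 2, by linarith, ⟨?_, ?_⟩, by linarith,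
      by linarith⟩
    · linarith [le_max_left (f a) (f a')]
    · linarith [le_max_right (f a) (f a')]

theorem Finset.max_inf'_lt_min_sup'_iff {ι α : Type*} [LinearOrder α] (f : ι → α)
    {A A' B B' : Finset ι} (hA : A.Nonempty) (hA' : A'.Nonempty) (hB : B.Nonempty)
    (hB' : B'.Nonempty) :
    max (A.inf' hA f) (A'.inf' hA' f) < min (B.sup' hB f) (B'.sup' hB' f) ↔
      ∃ x' ∈ A', ∃ x ∈ A, ∃ y ∈ B, ∃ y' ∈ B', max (f x) (f x') < min (f y) (f y') := by
  constructor
  · intro h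
    obtain ⟨x, hx, hfx⟩ := Finset.exists_mem_eq_inf' hA f
    obtain ⟨x', hx', hfx'⟩ := Finset.exists_mem_eq_inf' hA' f
    obtain ⟨y, hy, hfy⟩ := Finset.exists_mem_eq_sup' hB f
    obtain ⟨y', hy', hfy'⟩ := Finset.exists_mem_eq_sup' hB' f
    exact ⟨x', hx', x, hx, y, hy, y', hy', by rwa [← hfx, ← hfx', ← hfy, ← hfy']⟩
  · rintro ⟨x', hx', x, hx, y, hy, y', hy', h⟩
    calc max (A.inf' hA f) (A'.inf' hA' f) ≤ max (f x) (f x') :=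
          max_le_max (Finset.inf'_le f hx) (Finset.inf'_le f hx')
      _ < min (f y) (f y') := h
      _ ≤ min (B.sup' hB f) (B'.sup' hB' f) :=
          min_le_min (Finset.le_sup' f hy) (Finset.le_sup' f hy')

theorem statement10_general (n : ℕ) [NeZero n] (D : Fin n → Fin n → ℝ) (hD : IsDissim D)
    (hR : CircRobinson D)
    (a : Fin n) (k : ℕ)
    (A A' B B' : Finset (Fin n))
    (hA : ↑A ⊆ arcSet n a k) (hB : ↑B ⊆ arcSet n a k)
    (hA' : ↑A' ⊆ (arcSet n a k)ᶜ) (hB' : ↑B' ⊆ (arcSet n a k)ᶜ)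
    (haA : a ∈ A) (hbB : a + (k : Fin n) ∈ B)
    (ha'A' : a - 1 ∈ A') (hb'B' : a + (k : Fin n) + 1 ∈ B')
    (horder :
      (∀ x' ∈ A', ∀ x ∈ A, ∀ y ∈ B, ∀ y' ∈ B', CycOrd4 x' x y y') ∨
      (∀ x' ∈ A', ∀ x ∈ A, ∀ y ∈ B, ∀ y' ∈ B', CycOrd4 x' y x y'))
    (z : Fin n) :
    ((∃ r : ℝ, 0 < r ∧
        ({a, a - 1} : Set (Fin n)) ⊆ {j | D z j ≤ r} ∧
        ({a + (k : Fin n), a + (k : Fin n) + 1} : Set (Fin n)) ∩ {j | D z j ≤ r} = ∅) ↔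
      (∃ x' ∈ A', ∃ x ∈ A, ∃ y ∈ B, ∃ y' ∈ B',
        max (D z x) (D z x') < min (D z y) (D z y'))) ∧
    ((∃ x' ∈ A', ∃ x ∈ A, ∃ y ∈ B, ∃ y' ∈ B',
        max (D z x) (D z x') < min (D z y) (D z y')) ↔
      max (A.inf' ⟨a, haA⟩ (D z)) (A'.inf' ⟨a - 1, ha'A'⟩ (D z)) <
        min (B.sup' ⟨a + (k : Fin n), hbB⟩ (D z))
            (B'.sup' ⟨a + (k : Fin n) + 1, hb'B'⟩ (D z))) := by
  have hk : k + 1 < n := add_one_lt_of_sub_one_notMem_arcSet (hA' ha'A')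
  have hborders : (∃ x' ∈ A', ∃ x ∈ A, ∃ y ∈ B, ∃ y' ∈ B',
      max (D z x) (D z x') < min (D z y) (D z y')) →
      max (D z a) (D z (a - 1)) < min (D z (a + (k : Fin n))) (D z (a + (k : Fin n) + 1)) := by
    rintro ⟨x', hx', x, hx, y, hy, y', hy', hlt⟩
    rcases horder with hord | hord
    · exact hR.max_border_lt_min_border hD hk (hA hx) (hB hy) (hA' hx') (hB' hy')
        (hord x' hx' x hx y hy y' hy') hlt
    · obtain ⟨-, -, -, -, -, -, hcyc, -⟩ := hord _ ha'A' _ haA _ hbB _ hb'B'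
      exact absurd hcyc (not_cycOrd_sub_one_add_self hk)
  refine ⟨(exists_pos_sublevel_separating_iff (D z) (hD.2.1 z) _ _ _ _).trans
    ⟨fun h => ⟨_, ha'A', _, haA, _, hbB, _, hb'B', h⟩, hborders⟩, ?_⟩
  exact (Finset.max_inf'_lt_min_sup'_iff (D z) _ _ _ _).symm

/-- Correctness of border-candidate orientation: for border candidates
`(A', A, B, B')` of the proper arc `I = {a, …, a+k}` (with borders `a`, `b = a+k`,
and `a' = a-1`, `b' = b+1` the borders of `Iᶜ`), the three tests are equivalent. -/
theorem statement10 (n : ℕ) [NeZero n] (D : Fin n → Fin n → ℝ) (hD : IsDissim D)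
    (hR : CircRobinson D)
    (a : Fin n) (k : ℕ) (hk : k ≤ n - 2)
    (A A' B B' : Finset (Fin n))
    (hA : ↑A ⊆ arcSet n a k) (hB : ↑B ⊆ arcSet n a k)
    (hA' : ↑A' ⊆ (arcSet n a k)ᶜ) (hB' : ↑B' ⊆ (arcSet n a k)ᶜ)
    (hAB : Disjoint A B) (hAA' : Disjoint A A') (hAB' : Disjoint A B')
    (hBA' : Disjoint B A') (hBB' : Disjoint B B') (hA'B' : Disjoint A' B')
    (haA : a ∈ A) (hbB : a + (k : Fin n) ∈ B)
    (ha'A' : a - 1 ∈ A') (hb'B' : a + (k : Fin n) + 1 ∈ B')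
    (horder :
      (∀ x' ∈ A', ∀ x ∈ A, ∀ y ∈ B, ∀ y' ∈ B', CycOrd4 x' x y y') ∨
      (∀ x' ∈ A', ∀ x ∈ A, ∀ y ∈ B, ∀ y' ∈ B', CycOrd4 x' y x y'))
    (z : Fin n) :
    ((∃ r : ℝ, 0 < r ∧
        ({a, a - 1} : Set (Fin n)) ⊆ {j | D z j ≤ r} ∧
        ({a + (k : Fin n), a + (k : Fin n) + 1} : Set (Fin n)) ∩ {j | D z j ≤ r} = ∅) ↔
      (∃ x' ∈ A', ∃ x ∈ A, ∃ y ∈ B, ∃ y' ∈ B',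
        max (D z x) (D z x') < min (D z y) (D z y'))) ∧
    ((∃ x' ∈ A', ∃ x ∈ A, ∃ y ∈ B, ∃ y' ∈ B',
        max (D z x) (D z x') < min (D z y) (D z y')) ↔
      max (A.inf' ⟨a, haA⟩ (D z)) (A'.inf' ⟨a - 1, ha'A'⟩ (D z)) <
        min (B.sup' ⟨a + (k : Fin n), hbB⟩ (D z))
            (B'.sup' ⟨a + (k : Fin n) + 1, hb'B'⟩ (D z))) :=
  statement10_general n D hD hR a k A A' B B' hA hB hA' hB' haA hbB ha'A' hb'B' horder z
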